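/- arXiv:math/0610718 — 5 statements merged into one kernel-verified Lean document; each statement's English description precedes it below -/
import Mathlib

section
/- For nonnegative integers ℓ, m with m ≤ 2ℓ, and A(z) := z^ℓ, the iterated Dunkl derivative satisfies D^m x^{2ℓ} = Σ_{j=0}^{m} 2^{m-2j} A^{(m-j)}(x²) · (1/j!) · D^{2j} x^m, where A^{(m-j)} denotes the (m-j)-th ordinary derivative of A and D is the one-dimensional Dunkl operator with parameter α. -/
/-
Because `f(x²)` is even, `D (f(x²) g) = 2x f'(x²) g + f(x²) D g`. The commutation relation
`[D, x] = 1 + 2α s`, with the reflection `s` anticommuting with `D`, gives `[D², x] = 2D`, hence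
`D^{2j} (x g) = x D^{2j} g + 2j D^{2j-1} g`. With these two rules the formula holds for every
polynomial `A` and every `m`, by induction on `m` exactly as for Hobson's formula for ordinary
derivatives.
-/

open Polynomial

/-- The one-dimensional Dunkl operator with parameter `α` acting on polynomials:
`D f = f' + α * (f(x) - f(-x))/x`. -/
noncomputable def dunkl1 (α : ℝ) (p : Polynomial ℝ) : Polynomial ℝ :=
  derivative p + C α * (p - p.comp (-X)).divX

open Finset

theorem Polynomial.divX_X_mul {R : Type*} [Semiring R] (p : R[X]) : divX (X * p) = p := by
  ext n
  simp [coeff_divX, coeff_X_mul]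

theorem Polynomial.X_dvd_sub_comp_neg_X {R : Type*} [CommRing R] (p : R[X]) :
    X ∣ p - p.comp (-X) := by
  simp [X_dvd_iff, coeff_zero_eq_eval_zero]

theorem Polynomial.comp_X_sq_comp_neg_X {R : Type*} [CommRing R] (p : R[X]) :
    (p.comp (X ^ 2)).comp (-X) = p.comp (X ^ 2) := by
  simp [comp_assoc]

section Dunkl

variable (α : ℝ)

theorem dunkl1_mul_of_comp_neg_X_eq {e : ℝ[X]} (he : e.comp (-X) = e) (g : ℝ[X]) :
    dunkl1 α (e * g) = derivative e * g + e * dunkl1 α g := by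
  obtain ⟨r, hr⟩ := X_dvd_sub_comp_neg_X g
  have hodd : e * g - (e * g).comp (-X) = X * (e * r) := by
    rw [mul_comp, he, ← mul_sub, hr]; ring
  simp only [dunkl1, hodd, hr, divX_X_mul, derivative_mul]
  ring

theorem dunkl1_C_mul (c : ℝ) (p : ℝ[X]) : dunkl1 α (C c * p) = C c * dunkl1 α p := by
  simpa using dunkl1_mul_of_comp_neg_X_eq α (C_comp (a := c) (p := -X)) p

theorem dunkl1_add (p q : ℝ[X]) : dunkl1 α (p + q) = dunkl1 α p + dunkl1 α q := by
  simp only [dunkl1, derivative_add, add_comp, divX_add, add_sub_add_comm]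
  ring

noncomputable def dunkl1LinearMap : ℝ[X] →ₗ[ℝ] ℝ[X] where
  toFun := dunkl1 α
  map_add' := dunkl1_add α
  map_smul' c p := by simpa only [smul_eq_C_mul, RingHom.id_apply] using dunkl1_C_mul α c p

theorem dunkl1_sum {ι : Type*} (s : Finset ι) (f : ι → ℝ[X]) :
    dunkl1 α (∑ i ∈ s, f i) = ∑ i ∈ s, dunkl1 α (f i) :=
  map_sum (dunkl1LinearMap α) f s

theorem dunkl1_X_mul (p : ℝ[X]) :
    dunkl1 α (X * p) = X * dunkl1 α p + p + C (2 * α) * p.comp (-X) := by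
  obtain ⟨r, hr⟩ := X_dvd_sub_comp_neg_X p
  have heven : X * p - (X * p).comp (-X) = X * (p + p.comp (-X)) := by
    rw [mul_comp, X_comp]; ring
  simp only [dunkl1, heven, hr, divX_X_mul, derivative_mul, derivative_X, map_mul, map_ofNat]
  linear_combination (C α) * hr

theorem dunkl1_comp_neg_X (p : ℝ[X]) : dunkl1 α (p.comp (-X)) = -(dunkl1 α p).comp (-X) := by
  obtain ⟨r, hr⟩ := X_dvd_sub_comp_neg_X p
  have hneg : (p.comp (-X)).comp (-X) = p := by simp [comp_assoc]
  have hr_even : r.comp (-X) = r := by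
    have := congrArg (·.comp (-X)) hr
    simp only [sub_comp, hneg, mul_comp, X_comp] at this
    exact mul_left_cancel₀ X_ne_zero (by linear_combination this + hr)
  have hodd : p.comp (-X) - (p.comp (-X)).comp (-X) = X * (-r) := by
    rw [hneg]; linear_combination -hr
  simp only [dunkl1, hodd, hr, divX_X_mul, derivative_comp, derivative_neg, derivative_X, add_comp,
    mul_comp, C_comp, hr_even]
  ring

theorem dunkl1_dunkl1_X_mul (p : ℝ[X]) :
    dunkl1 α (dunkl1 α (X * p)) = X * dunkl1 α (dunkl1 α p) + 2 * dunkl1 α p := by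
  simp only [dunkl1_X_mul, dunkl1_add, dunkl1_C_mul, dunkl1_comp_neg_X]
  ring

theorem dunkl1_iterate_two_mul_X_mul (n : ℕ) (p : ℝ[X]) :
    (dunkl1 α)^[2 * n] (X * p) =
      X * (dunkl1 α)^[2 * n] p + C (2 * n : ℝ) * (dunkl1 α)^[2 * n - 1] p := by
  induction n with
  | zero => simp
  | succ n ih =>
    have hodd : C (2 * n : ℝ) * dunkl1 α (dunkl1 α ((dunkl1 α)^[2 * n - 1] p)) =
        C (2 * n : ℝ) * dunkl1 α ((dunkl1 α)^[2 * n] p) := by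
      rcases n with _ | n
      · simp
      · rw [show 2 * (n + 1) - 1 = 2 * n + 1 by omega, show 2 * (n + 1) = 2 * n + 1 + 1 by omega]
        simp only [Function.iterate_succ_apply']
    rw [show 2 * (n + 1) = 2 * n + 1 + 1 by omega, Nat.add_sub_cancel]
    simp only [Function.iterate_succ_apply', ih, dunkl1_add, dunkl1_C_mul, dunkl1_dunkl1_X_mul,
      hodd]
    push_cast
    simp only [map_add, map_mul, map_ofNat, map_natCast, map_one]
    ring

theorem natDegree_dunkl1_le (p : ℝ[X]) : (dunkl1 α p).natDegree ≤ p.natDegree - 1 := by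
  refine natDegree_add_le_of_degree_le (natDegree_derivative_le p) ?_
  refine (natDegree_C_mul_le _ _).trans ?_
  rw [natDegree_divX_eq_natDegree_tsub_one]
  refine Nat.sub_le_sub_right ((natDegree_sub_le _ _).trans (max_le le_rfl ?_)) 1
  simp [natDegree_comp]

theorem dunkl1_C (c : ℝ) : dunkl1 α (C c) = 0 := by
  simp [dunkl1]

theorem dunkl1_iterate_eq_zero_of_natDegree_lt {p : ℝ[X]} {k : ℕ} (hk : p.natDegree < k) :
    (dunkl1 α)^[k] p = 0 := by
  have hdeg : ∀ n, ((dunkl1 α)^[n] p).natDegree ≤ p.natDegree - n := by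
    intro n
    induction n with
    | zero => simp
    | succ n ih =>
      rw [Function.iterate_succ_apply']
      exact (natDegree_dunkl1_le α _).trans (by omega)
  obtain ⟨n, rfl⟩ := Nat.exists_eq_add_of_lt hk
  rw [show p.natDegree + n + 1 = n + (p.natDegree + 1) by omega, Function.iterate_add_apply,
    Function.iterate_succ_apply',
    eq_C_of_natDegree_eq_zero (p := (dunkl1 α)^[p.natDegree] p) (by simpa using hdeg p.natDegree),
    dunkl1_C]
  exact Function.iterate_fixed (by simpa using dunkl1_C α 0) n

noncomputable def hobsonCoeff (m j : ℕ) : ℝ :=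
  (2 : ℝ) ^ ((m : ℤ) - 2 * (j : ℤ)) / j.factorial

theorem hobsonCoeff_succ_left (m j : ℕ) : hobsonCoeff (m + 1) j = 2 * hobsonCoeff m j := by
  rw [hobsonCoeff, hobsonCoeff, Nat.cast_succ, add_sub_right_comm, zpow_add_one₀ two_ne_zero]
  ring

theorem hobsonCoeff_succ_succ_mul (m j : ℕ) :
    hobsonCoeff (m + 1) (j + 1) * (2 * (j + 1 : ℕ)) = hobsonCoeff m j := by
  have hexp : ((m + 1 : ℕ) : ℤ) - 2 * ((j + 1 : ℕ) : ℤ) = m - 2 * (j : ℤ) - 1 := by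
    push_cast; ring
  rw [hobsonCoeff, hobsonCoeff, hexp, zpow_sub_one₀ two_ne_zero, Nat.factorial_succ]
  push_cast
  field_simp

noncomputable def hobsonTerm (A : ℝ[X]) (m j : ℕ) : ℝ[X] :=
  C (hobsonCoeff m j) * (derivative^[m - j] A).comp (X ^ 2) * (dunkl1 α)^[2 * j] (X ^ m)

theorem dunkl1_hobsonTerm (A : ℝ[X]) {m j : ℕ} (hj : j ≤ m) :
    dunkl1 α (hobsonTerm α A m j) =
      C (hobsonCoeff (m + 1) j) * (derivative^[m + 1 - j] A).comp (X ^ 2) *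
          (X * (dunkl1 α)^[2 * j] (X ^ m)) +
        C (hobsonCoeff (m + 1) (j + 1)) * (derivative^[m + 1 - (j + 1)] A).comp (X ^ 2) *
          (C (2 * (j + 1 : ℕ) : ℝ) * (dunkl1 α)^[2 * (j + 1) - 1] (X ^ m)) := by
  have heven : (C (hobsonCoeff m j) * (derivative^[m - j] A).comp (X ^ 2)).comp (-X) =
      C (hobsonCoeff m j) * (derivative^[m - j] A).comp (X ^ 2) := by
    rw [mul_comp, C_comp, comp_X_sq_comp_neg_X]
  rw [hobsonTerm, dunkl1_mul_of_comp_neg_X_eq α heven, show m + 1 - j = m - j + 1 by omega,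
    Nat.add_sub_add_right, show 2 * (j + 1) - 1 = 2 * j + 1 by omega,
    Function.iterate_succ_apply', Function.iterate_succ_apply', hobsonCoeff_succ_left m j,
    ← hobsonCoeff_succ_succ_mul m j, derivative_mul, derivative_C, derivative_comp,
    derivative_X_sq]
  simp only [map_mul, map_ofNat, map_natCast]
  ring

theorem dunkl1_iterate_comp_X_sq (A : ℝ[X]) (m : ℕ) :
    (dunkl1 α)^[m] (A.comp (X ^ 2)) = ∑ j ∈ range (m + 1), hobsonTerm α A m j := by
  induction m with
  | zero => simp [hobsonTerm, hobsonCoeff]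
  | succ m ih =>
    rw [Function.iterate_succ_apply', ih, dunkl1_sum,
      sum_congr rfl fun j hj => dunkl1_hobsonTerm α A (Nat.lt_succ_iff.mp (mem_range.mp hj)),
      sum_add_distrib]
    simp only [hobsonTerm, pow_succ' X m, dunkl1_iterate_two_mul_X_mul, mul_add (R := ℝ[X]),
      sum_add_distrib]
    -- the new top term has `2 (m + 1) > m`, the commutator term at `j = 0` has coefficient `0`
    rw [sum_range_succ _ (m + 1), sum_range_succ' _ (m + 1),
      dunkl1_iterate_eq_zero_of_natDegree_lt α (k := 2 * (m + 1)) (by simp; omega)]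
    simp only [mul_zero, zero_mul, Nat.cast_zero, map_zero, add_zero]

end Dunkl

theorem hobson_one_dim_general (α : ℝ) (ℓ m : ℕ) :
    (dunkl1 α)^[m] (X ^ (2 * ℓ)) =
      ∑ j ∈ Finset.range (m + 1),
        C ((2 : ℝ) ^ ((m : ℤ) - 2 * (j : ℤ))) *
          ((derivative^[m - j] (X ^ ℓ : Polynomial ℝ)).comp (X ^ 2)) *
          C (1 / (j.factorial : ℝ)) * (dunkl1 α)^[2 * j] (X ^ m) := by
  have hA : (X ^ (2 * ℓ) : ℝ[X]) = (X ^ ℓ).comp (X ^ 2) := by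
    rw [pow_comp, X_comp, ← pow_mul, mul_comm]
  rw [hA, dunkl1_iterate_comp_X_sq]
  refine sum_congr rfl fun j _ => ?_
  rw [hobsonTerm, hobsonCoeff, div_eq_mul_one_div, C_mul]
  ring

/-- Lemma 5.1 (Hobson-type formula): for `A(z) = z^ℓ` and `m ≤ 2ℓ`,
`D^m x^{2ℓ} = ∑_{j=0}^m 2^{m-2j} A^{(m-j)}(x²) (1/j!) D^{2j} x^m`. -/
theorem hobson_one_dim (α : ℝ) (ℓ m : ℕ) (h : m ≤ 2 * ℓ) :
    (dunkl1 α)^[m] (X ^ (2 * ℓ)) =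
      ∑ j ∈ Finset.range (m + 1),
        C ((2 : ℝ) ^ ((m : ℤ) - 2 * (j : ℤ))) *
          ((derivative^[m - j] (X ^ ℓ : Polynomial ℝ)).comp (X ^ 2)) *
          C (1 / (j.factorial : ℝ)) * (dunkl1 α)^[2 * j] (X ^ m) :=
  hobson_one_dim_general α ℓ m
end

section
/- The Dunkl operators commute: for i ≠ j, the operators D_i and D_j on polynomials in variables x_0,...,x_k satisfy D_i D_j = D_j D_i, where D_j u(x) = ∂u/∂x_j + α_j (u(x) - u(σ_j x))/x_j and σ_j reflects the j-th coordinate. -/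
open MvPolynomial

variable {k : ℕ}

/-- Reflection of the `j`-th variable: the algebra map sending `X j ↦ -X j`. -/
noncomputable def reflectVar (j : Fin (k + 1)) :
    MvPolynomial (Fin (k + 1)) ℝ →ₐ[ℝ] MvPolynomial (Fin (k + 1)) ℝ :=
  aeval (fun i => if i = j then -X i else X i)

/-- The `j`-th Dunkl operator on polynomials:
`D_j u = ∂_j u + α_j * (u - u ∘ σ_j)/x_j`; the division by `x_j` is exact since
`u - u ∘ σ_j` is odd in `x_j`, and is implemented by `divMonomial`. -/
noncomputable def dunklD (α : Fin (k + 1) → ℝ) (j : Fin (k + 1))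
    (p : MvPolynomial (Fin (k + 1)) ℝ) : MvPolynomial (Fin (k + 1)) ℝ :=
  pderiv j p + C (α j) * (p - reflectVar j p).divMonomial (Finsupp.single j 1)

/-- The Dunkl Laplacian `Δ_α = ∑_j D_j²` on polynomials. -/
noncomputable def dunklLap (α : Fin (k + 1) → ℝ)
    (p : MvPolynomial (Fin (k + 1)) ℝ) : MvPolynomial (Fin (k + 1)) ℝ :=
  ∑ j, dunklD α j (dunklD α j p)



lemma reflectVar_monomial (j : Fin (k + 1)) (s : Fin (k + 1) →₀ ℕ) (a : ℝ) :
    reflectVar j (monomial s a) = monomial s ((-1) ^ (s j) * a) := by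
  classical
  rw [reflectVar, aeval_monomial]
  have h : (s.prod fun n e => (if n = j then -X n else X n : MvPolynomial (Fin (k+1)) ℝ) ^ e)
      = C ((-1 : ℝ) ^ (s j)) * s.prod fun n e => (X n : MvPolynomial (Fin (k+1)) ℝ) ^ e := by
    rw [Finsupp.prod, Finsupp.prod]
    have : ∀ n ∈ s.support, (if n = j then -X n else X n : MvPolynomial (Fin (k+1)) ℝ) ^ s n
        = (if n = j then C ((-1:ℝ)^(s n)) else 1) * (X n : MvPolynomial (Fin (k+1)) ℝ) ^ s n := by
      intro n _
      by_cases h : n = j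
      · rw [if_pos h, if_pos h,
          show (-X n : MvPolynomial (Fin (k+1)) ℝ) = C (-1) * X n by simp, mul_pow, ← map_pow]
      · simp [h]
    rw [Finset.prod_congr rfl this, Finset.prod_mul_distrib, Finset.prod_ite_eq' s.support j]
    by_cases hj : j ∈ s.support
    · simp [hj]
    · simp [hj, Finsupp.notMem_support_iff.mp hj]
  rw [h, monomial_eq, algebraMap_eq, map_mul]
  ring

lemma divMonomial_monomial' (j : Fin (k + 1)) (s : Fin (k + 1) →₀ ℕ) (a : ℝ) (hs : 1 ≤ s j) :
    (monomial s a).divMonomial (Finsupp.single j 1) = monomial (s - Finsupp.single j 1) a := by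
  classical
  have hs' : Finsupp.single j 1 + (s - Finsupp.single j 1) = s := by
    ext n
    by_cases hn : n = j
    · subst hn; simp [Finsupp.tsub_apply]; omega
    · simp [Finsupp.tsub_apply, Finsupp.single_apply, Ne.symm hn]
  rw [show monomial s a
      = monomial (Finsupp.single j 1) (1:ℝ) * monomial (s - Finsupp.single j 1) a by
    rw [monomial_mul, one_mul, hs'], divMonomial_monomial_mul]

lemma dunklD_monomial (α : Fin (k + 1) → ℝ) (j : Fin (k + 1)) (s : Fin (k + 1) →₀ ℕ) (a : ℝ) :
    dunklD α j (monomial s a)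
      = monomial (s - Finsupp.single j 1) (((s j : ℝ) + α j * (1 - (-1) ^ (s j))) * a) := by
  classical
  rw [dunklD, pderiv_monomial, reflectVar_monomial]
  rw [show monomial s a - monomial s ((-1)^(s j) * a) = monomial s ((1 - (-1)^(s j)) * a) by
    rw [← map_sub]; ring_nf]
  rcases Nat.eq_zero_or_pos (s j) with h | h
  · have hss : s - Finsupp.single j 1 = s := by
      ext n
      by_cases hn : n = j
      · subst hn; simp [Finsupp.tsub_apply, h]
      · simp [Finsupp.tsub_apply, Finsupp.single_apply, Ne.symm hn]
    simp [h, hss]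
  · rw [divMonomial_monomial' j _ _ h, C_mul_monomial, ← map_add]
    ring_nf

/-- The Dunkl operators commute: `D_i D_j = D_j D_i`. -/
theorem dunkl_operators_commute (α : Fin (k + 1) → ℝ) (i j : Fin (k + 1)) (hij : i ≠ j)
    (p : MvPolynomial (Fin (k + 1)) ℝ) :
    dunklD α i (dunklD α j p) = dunklD α j (dunklD α i p) := by
  classical
  have hadd : ∀ (m : Fin (k+1)) (p q : MvPolynomial (Fin (k+1)) ℝ),
      dunklD α m (p + q) = dunklD α m p + dunklD α m q := by
    intro m p q
    simp only [dunklD, map_add]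
    rw [show p + q - (reflectVar m p + reflectVar m q)
        = (p - reflectVar m p) + (q - reflectVar m q) by ring, add_divMonomial]
    ring
  induction p using MvPolynomial.induction_on' with
  | add p q hp hq => rw [hadd, hadd, hadd i, hadd j, hp, hq]
  | monomial s a =>
    rw [dunklD_monomial, dunklD_monomial, dunklD_monomial, dunklD_monomial]
    have h1 : ((s - Finsupp.single j 1 : Fin (k+1) →₀ ℕ)) i = s i := by
      simp [Finsupp.tsub_apply, Finsupp.single_apply, Ne.symm hij]
    have h2 : ((s - Finsupp.single i 1 : Fin (k+1) →₀ ℕ)) j = s j := by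
      simp [Finsupp.tsub_apply, Finsupp.single_apply, hij]
    rw [h1, h2, tsub_right_comm]
    ring_nf
end

section
/- Let a_0 < ... < a_k and let (r, s_1, ..., s_k) be sphero-conal coordinates of a point (x_0,...,x_k) with all x_j > 0: r² = Σ_j x_j², and Σ_{j=0}^k x_j²/(s_i - a_j) = 0 for i = 1,...,k with a_{i-1} < s_i < a_i. Then for every θ different from all a_j: r² (s_1 - θ)···(s_k - θ) = (Π_{i=0}^k (a_i - θ)) · Σ_{j=0}^k x_j²/(a_j - θ). -/
open Polynomial Finset

private lemma spc_prod_eq {ι : Type*} (t : Finset ι) (b : ι → ℝ) :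
    (∏ i ∈ t, (C (b i) - X) : ℝ[X]) = C ((-1 : ℝ) ^ t.card) * ∏ i ∈ t, (X - C (b i)) := by
  have : (C ((-1 : ℝ) ^ t.card) : ℝ[X]) = ∏ _i ∈ t, (-1 : ℝ[X]) := by
    rw [Finset.prod_const, map_pow, map_neg, map_one]
  rw [this, ← Finset.prod_mul_distrib]
  exact Finset.prod_congr rfl fun i _ => by ring

private lemma spc_monic {ι : Type*} (t : Finset ι) (b : ι → ℝ) :
    ((∏ i ∈ t, (X - C (b i)) : ℝ[X])).Monic :=
  monic_prod_of_monic _ _ fun i _ => monic_X_sub_C _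

private lemma spc_natDegree {ι : Type*} (t : Finset ι) (b : ι → ℝ) :
    ((∏ i ∈ t, (X - C (b i)) : ℝ[X])).natDegree = t.card := by
  rw [natDegree_prod_of_monic _ _ fun i _ => monic_X_sub_C _]
  simp [natDegree_X_sub_C]

private lemma spc_natDegree_le {ι : Type*} (t : Finset ι) (b : ι → ℝ) :
    ((∏ i ∈ t, (C (b i) - X) : ℝ[X])).natDegree ≤ t.card := by
  rw [spc_prod_eq]
  exact (natDegree_C_mul_le _ _).trans (spc_natDegree t b).le

private lemma spc_coeff {ι : Type*} (t : Finset ι) (b : ι → ℝ) :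
    ((∏ i ∈ t, (C (b i) - X) : ℝ[X])).coeff t.card = (-1 : ℝ) ^ t.card := by
  rw [spc_prod_eq, coeff_C_mul, ← spc_natDegree t b, (spc_monic t b).coeff_natDegree, mul_one]

private lemma spc_key {n : ℕ} (a : Fin n → ℝ) (f : Fin n → ℝ) (t : ℝ)
    (ht : ∀ j, a j - t ≠ 0) :
    ∑ j, f j * ∏ i ∈ Finset.univ.erase j, (a i - t)
      = (∏ i, (a i - t)) * ∑ j, f j / (a j - t) := by
  rw [Finset.mul_sum]
  refine Finset.sum_congr rfl fun j _ => ?_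
  rw [← Finset.mul_prod_erase _ _ (Finset.mem_univ j)]
  field_simp [ht j]

/-- Identity (4.8) for sphero-conal coordinates: if `(r, s_1,…,s_k)` are the sphero-conal
coordinates of a point `x` with all `x_j > 0`, then for every `θ` different from all `a_j`,
`r² ∏_i (s_i - θ) = (∏_i (a_i - θ)) ∑_j x_j²/(a_j - θ)`. -/
theorem spheroconal_identity {k : ℕ} (a : Fin (k + 1) → ℝ) (s : Fin k → ℝ)
    (x : Fin (k + 1) → ℝ) (r : ℝ)
    (ha : StrictMono a) (hx : ∀ j, 0 < x j) (hr : 0 < r)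
    (hs : ∀ i : Fin k, a i.castSucc < s i ∧ s i < a i.succ)
    (hr2 : r ^ 2 = ∑ j, (x j) ^ 2)
    (heq : ∀ i : Fin k, ∑ j, (x j) ^ 2 / (s i - a j) = 0)
    (θ : ℝ) (hθ : ∀ j, θ ≠ a j) :
    r ^ 2 * ∏ i, (s i - θ) = (∏ i, (a i - θ)) * ∑ j, (x j) ^ 2 / (a j - θ) := by
  classical
  -- `s i` is never equal to any `a j`
  have hsa : ∀ (i : Fin k) (j : Fin (k + 1)), a j - s i ≠ 0 := by
    intro i j
    rcases le_or_gt (j : ℕ) (i : ℕ) with h | h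
    · have h1 : a j ≤ a i.castSucc := ha.monotone (by simpa [Fin.le_def] using h)
      exact ne_of_lt (sub_neg.mpr (lt_of_le_of_lt h1 (hs i).1))
    · have h1 : a i.succ ≤ a j := ha.monotone (by simp [Fin.le_def]; omega)
      exact ne_of_gt (sub_pos.mpr (lt_of_lt_of_le (hs i).2 h1))
  have hθa : ∀ j, a j - θ ≠ 0 := fun j => sub_ne_zero.mpr (Ne.symm (hθ j))
  -- `s` is injective
  have hsmono : StrictMono s := by
    intro i i' hii'
    have h1 : a i.succ ≤ a i'.castSucc := ha.monotone (by simp [Fin.le_def]; omega)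
    exact lt_trans (lt_of_lt_of_le (hs i).2 h1) (hs i').1
  -- the two polynomials
  set P : ℝ[X] := C (r ^ 2) * ∏ i, (C (s i) - X) with hP
  set Q : ℝ[X] := ∑ j, C ((x j) ^ 2) * ∏ i ∈ Finset.univ.erase j, (C (a i) - X) with hQ
  have hcard : ∀ j : Fin (k + 1), (Finset.univ.erase j).card = k := by
    intro j
    rw [Finset.card_erase_of_mem (Finset.mem_univ j), Finset.card_univ, Fintype.card_fin]
    omega
  -- degree bounds
  have hPdeg : P.natDegree ≤ k := by
    refine (natDegree_C_mul_le _ _).trans ?_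
    simpa using spc_natDegree_le (Finset.univ : Finset (Fin k)) s
  have hQdeg : Q.natDegree ≤ k := by
    refine natDegree_sum_le_of_forall_le _ _ fun j _ => ?_
    refine (natDegree_C_mul_le _ _).trans ?_
    simpa [hcard j] using spc_natDegree_le (Finset.univ.erase j) a
  -- coefficients at `k`
  have hPcoeff : P.coeff k = r ^ 2 * (-1 : ℝ) ^ k := by
    rw [hP, coeff_C_mul]
    congr 1
    simpa using spc_coeff (Finset.univ : Finset (Fin k)) s
  have hQcoeff : Q.coeff k = r ^ 2 * (-1 : ℝ) ^ k := by
    rw [hQ, finset_sum_coeff, hr2, Finset.sum_mul]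
    refine Finset.sum_congr rfl fun j _ => ?_
    rw [coeff_C_mul]
    congr 1
    have := spc_coeff (Finset.univ.erase j) a
    rwa [hcard j] at this
  -- evaluations
  have hevalprod : ∀ {ι : Type} [Fintype ι] (t : Finset ι) (b : ι → ℝ) (v : ℝ),
      eval v (∏ i ∈ t, (C (b i) - X) : ℝ[X]) = ∏ i ∈ t, (b i - v) := by
    intro ι _ t b v
    rw [eval_prod]
    exact Finset.prod_congr rfl fun i _ => by simp
  have hQeval : ∀ v : ℝ, Q.eval v = ∑ j, (x j) ^ 2 * ∏ i ∈ Finset.univ.erase j, (a i - v) := by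
    intro v
    rw [hQ, eval_finset_sum]
    exact Finset.sum_congr rfl fun j _ => by rw [eval_mul, eval_C, hevalprod]
  -- P = Q
  have hDzero : P - Q = 0 := by
    have hdeg : (P - Q).degree < (k : ℕ) := by
      rw [degree_lt_iff_coeff_zero]
      intro m hm
      rcases eq_or_lt_of_le hm with hm' | hm'
      · rw [coeff_sub, ← hm', hPcoeff, hQcoeff, sub_self]
      · rw [coeff_sub, coeff_eq_zero_of_natDegree_lt (lt_of_le_of_lt hPdeg hm'),
          coeff_eq_zero_of_natDegree_lt (lt_of_le_of_lt hQdeg hm'), sub_self]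
    by_cases hD : P - Q = 0
    · exact hD
    · refine eq_zero_of_natDegree_lt_card_of_eval_eq_zero (P - Q) hsmono.injective
        (fun i => ?_) ?_
      · rw [eval_sub]
        have hPe : P.eval (s i) = 0 := by
          rw [hP, eval_mul, eval_C, hevalprod]
          have : (s i - s i) = 0 := sub_self _
          rw [Finset.prod_eq_zero (Finset.mem_univ i) this, mul_zero]
        have hQe : Q.eval (s i) = 0 := by
          rw [hQeval, spc_key a (fun j => (x j) ^ 2) (s i) (hsa i)]
          have : ∑ j, (x j) ^ 2 / (a j - s i) = 0 := by
            have h0 := heq i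
            have : ∑ j, (x j) ^ 2 / (a j - s i) = -∑ j, (x j) ^ 2 / (s i - a j) := by
              rw [← Finset.sum_neg_distrib]
              exact Finset.sum_congr rfl fun j _ => by
                rw [← div_neg, neg_sub]
            rw [this, h0, neg_zero]
          rw [this, mul_zero]
        rw [hPe, hQe, sub_self]
      · rw [Fintype.card_fin]
        exact (natDegree_lt_iff_degree_lt hD).mpr hdeg
  have hPQ : P.eval θ = Q.eval θ := by rw [sub_eq_zero.mp hDzero]
  have hPe : P.eval θ = r ^ 2 * ∏ i, (s i - θ) := by
    rw [hP, eval_mul, eval_C, hevalprod]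
  rw [hPe] at hPQ
  rw [hPQ, hQeval, spc_key a (fun j => (x j) ^ 2) θ hθa]
end

section
/- Under the inversion of sphero-conal coordinates: if r > 0, a_{i-1} < s_i < a_i for i = 1,...,k, and x_j² = r² · Π_{i=1}^k (s_i - a_j) / Π_{i≠j} (a_i - a_j), then x_j² > 0, Σ_{j=0}^k x_j² = r², and Σ_{j=0}^k x_j²/(s_i - a_j) = 0 for each i = 1,...,k. -/
/-!
The sums `∑ⱼ (∏ᵢ (bᵢ - aⱼ)) / ∏_{l ≠ j} (a_l - a_j)` are the divided differences at the nodes `-aⱼ`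
of the monic polynomial `∏ᵢ (X + bᵢ)`, i.e. the coefficient of `X^k` of that polynomial: `1` for the
`k` factors in `∑ xⱼ² = r²` and `0` for the `k - 1` factors left in `∑ⱼ xⱼ² / (sᵢ - aⱼ)`.
Positivity comes from pairing `sᵢ - aⱼ` with `a_{j.succAbove i} - aⱼ`: by interlacing both have the
same sign.
-/

open Finset Polynomial Lagrange

theorem sum_prod_sub_div_prod_erase_sub {ι κ F : Type*} [Field F] [DecidableEq ι]
    {S : Finset ι} {a : ι → F} (ha : Set.InjOn a S) (t : Finset κ) (b : κ → F)
    (ht : #t < #S) :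
    ∑ j ∈ S, (∏ i ∈ t, (b i - a j)) / ∏ l ∈ S.erase j, (a l - a j) =
      if #t + 1 = #S then 1 else 0 := by
  have hP : (nodal t (-b)).degree < #S := by rw [degree_nodal]; exact_mod_cast ht
  calc ∑ j ∈ S, (∏ i ∈ t, (b i - a j)) / ∏ l ∈ S.erase j, (a l - a j)
      = ∑ j ∈ S, (nodal t (-b)).eval ((-a) j) / ∏ l ∈ S.erase j, ((-a) j - (-a) l) := by
        simp only [eval_nodal, Pi.neg_apply, neg_sub_neg]
    _ = (nodal t (-b)).coeff (#S - 1) := (coeff_eq_sum (neg_injective.comp_injOn ha) hP).symm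
    _ = if #t + 1 = #S then 1 else 0 := by
        split_ifs with h
        · rw [← h, Nat.add_sub_cancel, ← natDegree_nodal (v := -b), ← leadingCoeff, nodal_monic]
        · exact coeff_eq_zero_of_natDegree_lt (by rw [natDegree_nodal]; omega)

theorem Fin.prod_univ_erase_eq_prod_succAbove {M : Type*} [CommMonoid M] {n : ℕ}
    (f : Fin (n + 1) → M) (j : Fin (n + 1)) :
    ∏ l ∈ univ.erase j, f l = ∏ i, f (j.succAbove i) := by
  rw [← compl_singleton, ← Fin.image_succAbove_univ,
    prod_image Fin.succAbove_right_injective.injOn]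

theorem div_pos_of_interlacing {k : ℕ} {a : Fin (k + 1) → ℝ} {s : Fin k → ℝ} {i : Fin k}
    (ha : StrictMono a) (hs : a i.castSucc < s i ∧ s i < a i.succ) (j : Fin (k + 1)) :
    0 < (s i - a j) / (a (j.succAbove i) - a j) := by
  rcases lt_or_ge i.castSucc j with h | h
  · rw [Fin.succAbove_of_castSucc_lt _ _ h]
    have : a i.succ ≤ a j := ha.monotone (Fin.castSucc_lt_iff_succ_le.mp h)
    exact div_pos_of_neg_of_neg (by linarith) (by linarith [ha h])
  · rw [Fin.succAbove_of_le_castSucc _ _ h]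
    have : a j ≤ a i.castSucc := ha.monotone h
    exact div_pos (by linarith) (by linarith [ha (Fin.castSucc_lt_succ (i := i))])

/-- Inversion of sphero-conal coordinates: given `r > 0` and `s_i ∈ (a_{i-1}, a_i)`,
the quantities `x_j² = r² ∏_i (s_i - a_j) / ∏_{i ≠ j} (a_i - a_j)` are positive,
sum to `r²`, and satisfy `∑_j x_j²/(s_i - a_j) = 0` for each `i`. -/
theorem spheroconal_inverse {k : ℕ} (a : Fin (k + 1) → ℝ) (s : Fin k → ℝ) (r : ℝ)
    (ha : StrictMono a) (hr : 0 < r)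
    (hs : ∀ i : Fin k, a i.castSucc < s i ∧ s i < a i.succ) :
    let xsq : Fin (k + 1) → ℝ := fun j =>
      r ^ 2 * (∏ i, (s i - a j)) / ∏ i ∈ Finset.univ.erase j, (a i - a j)
    (∀ j, 0 < xsq j) ∧ (∑ j, xsq j = r ^ 2) ∧
      (∀ i : Fin k, ∑ j, xsq j / (s i - a j) = 0) := by
  intro xsq
  have hsum := sum_prod_sub_div_prod_erase_sub ha.injective.injOn (S := univ) (b := s)
  refine ⟨fun j => ?_, ?_, fun i => ?_⟩
  · have hxsq : xsq j = r ^ 2 * ∏ i, (s i - a j) / (a (j.succAbove i) - a j) := by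
      simp only [xsq, Fin.prod_univ_erase_eq_prod_succAbove, prod_div_distrib, mul_div_assoc]
    rw [hxsq]
    exact mul_pos (pow_pos hr 2) (prod_pos fun i _ => div_pos_of_interlacing ha (hs i) j)
  · simp_rw [xsq, mul_div_assoc, ← mul_sum, hsum univ (by simp)]
    simp
  · have hterm : ∀ j, xsq j / (s i - a j) =
        r ^ 2 * ((∏ m ∈ univ.erase i, (s m - a j)) / ∏ l ∈ univ.erase j, (a l - a j)) := by
      intro j
      have hij : s i - a j ≠ 0 :=
        (div_ne_zero_iff.mp (div_pos_of_interlacing ha (hs i) j).ne').1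
      simp only [xsq, ← mul_prod_erase univ _ (mem_univ i)]
      field_simp
    have hk : 0 < k := i.pos
    rw [sum_congr rfl fun j _ => hterm j, ← mul_sum, hsum (univ.erase i) (by simp),
      if_neg (by simp; omega), mul_zero]
end

section
/- Let f_m be a homogeneous polynomial of degree m and set γ = (1-k)/2 - Σ_j α_j. Then the function r^{2(m-γ)} f_m(D_0,...,D_k)[r^{2γ}] is a generalized spherical harmonic of degree m, i.e. a homogeneous polynomial of degree m annihilated by Δ_α. -/
open MvPolynomial

variable {k : ℕ}

section Helpers

variable (α : Fin (k + 1) → ℝ) (j : Fin (k + 1))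

local notation "P" => MvPolynomial (Fin (k + 1)) ℝ

lemma refl_X (i : Fin (k + 1)) : reflectVar j (X i) = if i = j then -X i else X i := by
  simp [reflectVar]

lemma refl_X_self : reflectVar j (X j) = -X j := by simp [refl_X]

lemma refl_C (c : ℝ) : reflectVar j (C c) = C c := by
  simp [reflectVar, algHom_C]

lemma exists_odd_div (p : P) : ∃ h : P, p - reflectVar j p = X j * h := by
  induction p using MvPolynomial.induction_on with
  | C a => exact ⟨0, by simp [refl_C]⟩
  | add p q hp hq =>
    obtain ⟨h1, e1⟩ := hp; obtain ⟨h2, e2⟩ := hq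
    exact ⟨h1 + h2, by rw [map_add]; linear_combination e1 + e2⟩
  | mul_X p i hp =>
    obtain ⟨h, e⟩ := hp
    by_cases hij : i = j
    · subst hij
      exact ⟨p + reflectVar i p, by rw [map_mul, refl_X_self]; ring⟩
    · refine ⟨h * X i, ?_⟩
      rw [map_mul, refl_X, if_neg hij]
      linear_combination (X i : P) * e

lemma dunklD_eq_of {p h : P} (hh : p - reflectVar j p = X j * h) :
    dunklD α j p = pderiv j p + C (α j) * h := by
  rw [dunklD, hh, X_mul_divMonomial]

lemma C_mul_divMonomial (a : ℝ) (p : P) (s : Fin (k + 1) →₀ ℕ) :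
    (C a * p).divMonomial s = C a * p.divMonomial s := by
  ext d
  simp [coeff_divMonomial, coeff_C_mul]

lemma dunklD_add (p q : P) : dunklD α j (p + q) = dunklD α j p + dunklD α j q := by
  obtain ⟨h1, e1⟩ := exists_odd_div j p
  obtain ⟨h2, e2⟩ := exists_odd_div j q
  rw [dunklD_eq_of α j e1, dunklD_eq_of α j e2, dunklD_eq_of α j (h := h1 + h2), map_add]
  · ring
  · rw [map_add]; linear_combination e1 + e2

lemma dunklD_C_mul (a : ℝ) (p : P) : dunklD α j (C a * p) = C a * dunklD α j p := by
  obtain ⟨h1, e1⟩ := exists_odd_div j p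
  rw [dunklD_eq_of α j e1, dunklD_eq_of α j (h := C a * h1), pderiv_C_mul]
  · ring
  · rw [map_mul, refl_C]; linear_combination (C a : P) * e1

lemma dunklD_zero : dunklD α j 0 = 0 := by
  have := dunklD_C_mul α j 0 0
  simpa using this

lemma dunklLap_add (p q : P) : dunklLap α (p + q) = dunklLap α p + dunklLap α q := by
  simp_rw [dunklLap, dunklD_add, ← Finset.sum_add_distrib]

lemma dunklLap_C_mul (a : ℝ) (p : P) : dunklLap α (C a * p) = C a * dunklLap α p := by
  simp_rw [dunklLap, dunklD_C_mul, Finset.mul_sum]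

lemma dunklLap_zero : dunklLap α 0 = 0 := by
  simpa using dunklLap_C_mul α 0 0

end Helpers

section HomHelpers
set_option linter.unusedSectionVars false
variable {σ : Type*} [Fintype σ] [DecidableEq σ]

lemma wdeg_single (i : σ) (n : ℕ) :
    (Finsupp.weight (1 : σ → ℕ)) (Finsupp.single i n) = n := by
  simp [Finsupp.weight_apply, Finsupp.sum_single_index]

lemma isHomogeneous_of_coeff {φ : MvPolynomial σ ℝ} {n : ℕ}
    (h : ∀ d, coeff d φ ≠ 0 → (Finsupp.weight (1 : σ → ℕ)) d = n) : φ.IsHomogeneous n :=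
  fun d hd => h d hd

lemma coeff_of_isHomogeneous {φ : MvPolynomial σ ℝ} {n : ℕ} (h : φ.IsHomogeneous n)
    {d} (hd : coeff d φ ≠ 0) : (Finsupp.weight (1 : σ → ℕ)) d = n := h hd

/-- pderiv preserves homogeneity, lowering degree by one. -/
lemma pderiv_isHomogeneous {φ : MvPolynomial σ ℝ} {n : ℕ} (h : φ.IsHomogeneous n) (i : σ) :
    (pderiv i φ).IsHomogeneous (n - 1) := by
  conv_lhs => rw [φ.as_sum]
  rw [map_sum]
  refine MvPolynomial.IsHomogeneous.sum _ _ _ fun d hd => ?_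
  rw [pderiv_monomial]
  rcases Nat.eq_zero_or_pos (d i) with h0 | h0
  · rw [h0]; simpa using isHomogeneous_zero σ ℝ (n-1)
  · apply isHomogeneous_monomial
    rw [Finsupp.degree_eq_weight_one]
    have hd' : (Finsupp.weight (1 : σ → ℕ)) d = n :=
      coeff_of_isHomogeneous h (mem_support_iff.mp hd)
    have : Finsupp.single i 1 + (d - Finsupp.single i 1) = d := by
      ext a
      simp only [Finsupp.coe_add, Finsupp.coe_tsub, Pi.add_apply, Pi.sub_apply]
      rcases eq_or_ne a i with rfl | ha
      · simp; omega
      · simp [Finsupp.single_apply, ha.symm, Ne.symm ha]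
    have h2 := congrArg (Finsupp.weight (1 : σ → ℕ)) this
    rw [map_add, wdeg_single] at h2
    show (Finsupp.weight (1 : σ → ℕ)) _ = _
    omega

lemma divMonomial_isHomogeneous {φ : MvPolynomial σ ℝ} {n : ℕ} (h : φ.IsHomogeneous n) (i : σ) :
    (φ.divMonomial (Finsupp.single i 1)).IsHomogeneous (n - 1) := by
  refine isHomogeneous_of_coeff fun d hd => ?_
  rw [coeff_divMonomial] at hd
  have := coeff_of_isHomogeneous h hd
  rw [map_add, wdeg_single] at this
  omega

/-- Euler's identity for homogeneous polynomials. -/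
lemma euler_identity {φ : MvPolynomial σ ℝ} {n : ℕ} (h : φ.IsHomogeneous n) :
    ∑ j : σ, X j * pderiv j φ = C (n : ℝ) * φ := by
  conv_lhs => rw [φ.as_sum]
  conv_rhs => rw [φ.as_sum]
  simp only [map_sum, Finset.mul_sum]
  rw [Finset.sum_comm]
  refine Finset.sum_congr rfl fun d hd => ?_
  have hdn : (Finsupp.weight (1 : σ → ℕ)) d = n :=
    coeff_of_isHomogeneous h (mem_support_iff.mp hd)
  have key : ∀ i : σ, X i * pderiv i (monomial d (coeff d φ))
      = monomial d ((d i : ℝ) * coeff d φ) := by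
    intro i
    rw [pderiv_monomial]
    rcases Nat.eq_zero_or_pos (d i) with h0 | h0
    · rw [h0]; simp
    · have hsingle : Finsupp.single i 1 + (d - Finsupp.single i 1) = d := by
        ext a
        simp only [Finsupp.coe_add, Finsupp.coe_tsub, Pi.add_apply, Pi.sub_apply]
        rcases eq_or_ne a i with rfl | ha
        · simp; omega
        · simp [Finsupp.single_apply, Ne.symm ha]
      rw [X, monomial_mul, hsingle, one_mul, mul_comm]
  simp only [key]
  rw [← map_sum, C_mul_monomial]
  congr 1
  rw [← Finset.sum_mul]
  congr 1
  have h1 : ∑ i : σ, ((d i : ℝ)) = ((∑ i : σ, d i : ℕ) : ℝ) := by push_cast; ring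
  rw [h1]
  congr 1
  have h2 : ∑ i : σ, d i = (Finsupp.weight (1 : σ → ℕ)) d := by
    rw [Finsupp.weight_apply, Finsupp.sum]
    rw [Finset.sum_subset (Finset.subset_univ d.support)]
    · simp
    · intro x _ hx
      simp [Finsupp.notMem_support_iff.mp hx]
  rw [h2, hdn]

end HomHelpers

section Hom2
variable (α : Fin (k + 1) → ℝ) (j : Fin (k + 1))
local notation "P" => MvPolynomial (Fin (k + 1)) ℝ

lemma refl_isHomogeneous {p : P} {n : ℕ} (h : p.IsHomogeneous n) :
    (reflectVar j p).IsHomogeneous n := by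
  have hg : ∀ i : Fin (k + 1),
      ((if i = j then -X i else X i : P)).IsHomogeneous 1 := by
    intro i
    rcases eq_or_ne i j with rfl | hij
    · simpa using (isHomogeneous_X ℝ i).neg
    · simpa [hij] using isHomogeneous_X ℝ i
  have := h.aeval (S := ℝ) (fun i => if i = j then -X i else X i) (n := 1) hg
  rw [one_mul] at this
  exact this

lemma dunklD_isHomogeneous {p : P} {n : ℕ} (h : p.IsHomogeneous n) :
    (dunklD α j p).IsHomogeneous (n - 1) := by
  exact (pderiv_isHomogeneous h j).add
    ((divMonomial_isHomogeneous (h.sub (refl_isHomogeneous j h)) j).C_mul _)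

lemma dunklLap_isHomogeneous {p : P} {n : ℕ} (h : p.IsHomogeneous n) :
    (dunklLap α p).IsHomogeneous (n - 2) := by
  refine IsHomogeneous.sum _ _ _ fun i _ => ?_
  have := dunklD_isHomogeneous α i (dunklD_isHomogeneous α i h)
  simpa [Nat.sub_sub] using this

lemma dunklD_of_hom_zero {p : P} (h : p.IsHomogeneous 0) : dunklD α j p = 0 := by
  have hc : p = C (coeff 0 p) := by
    ext d
    rcases eq_or_ne d 0 with rfl | hd
    · simp
    · rw [coeff_C, if_neg (Ne.symm hd)]
      exact h.coeff_eq_zero (fun H => hd ((Finsupp.degree_eq_zero_iff d).mp H))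
  rw [hc]
  simp [dunklD, refl_C j (coeff 0 p)]

lemma dunklLap_of_hom_le_one {p : P} {n : ℕ} (h : p.IsHomogeneous n) (hn : n ≤ 1) :
    dunklLap α p = 0 := by
  rw [dunklLap]
  refine Finset.sum_eq_zero fun i _ => ?_
  interval_cases n
  · rw [dunklD_of_hom_zero α i h]
    simpa using dunklD_of_hom_zero α i (isHomogeneous_C _ 0)
  · exact dunklD_of_hom_zero α i (by simpa using dunklD_isHomogeneous α i h)

end Hom2

section Comm
variable (α : Fin (k + 1) → ℝ) (j : Fin (k + 1))
local notation "P" => MvPolynomial (Fin (k + 1)) ℝ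
local notation "Rsq" => (∑ i, (X i : MvPolynomial (Fin (k + 1)) ℝ) ^ 2)

lemma refl_Rsq : reflectVar j Rsq = Rsq := by
  rw [map_sum]
  refine Finset.sum_congr rfl fun i _ => ?_
  rw [map_pow, refl_X]
  rcases eq_or_ne i j with rfl | hij
  · simp
  · simp [hij]

lemma pderiv_Rsq : pderiv j Rsq = C 2 * X j := by
  have hC2 : (C 2 : P) = 2 := map_ofNat C 2
  rw [map_sum, hC2]
  have key : ∀ i : Fin (k+1), pderiv j ((X i : P) ^ 2)
      = if i = j then (2 : P) * X j else 0 := by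
    intro i
    rcases eq_or_ne i j with rfl | hij
    · rw [if_pos rfl, pderiv_pow, pderiv_X_self]
      push_cast
      ring
    · rw [if_neg hij, pderiv_pow, pderiv_X_of_ne hij]
      simp
  simp only [key]
  simp

lemma D_Rsq_mul (q : P) :
    dunklD α j (Rsq * q) = Rsq * dunklD α j q + C 2 * (X j * q) := by
  obtain ⟨h, hh⟩ := exists_odd_div j q
  have h2 : Rsq * q - reflectVar j (Rsq * q) = X j * (Rsq * h) := by
    rw [map_mul, refl_Rsq]
    linear_combination (Rsq : P) * hh
  rw [dunklD_eq_of α j h2, dunklD_eq_of α j hh, pderiv_mul, pderiv_Rsq]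
  ring

lemma D_Xj_mul (q : P) :
    dunklD α j (X j * q)
      = q + X j * pderiv j q + C (α j) * (q + reflectVar j q) := by
  have h2 : X j * q - reflectVar j (X j * q) = X j * (q + reflectVar j q) := by
    have hx : (if j = j then -X j else X j : P) = -X j := if_pos rfl
    rw [map_mul, refl_X, hx]
    ring
  rw [dunklD_eq_of α j h2, pderiv_mul, pderiv_X_self]
  ring

lemma DD_Rsq_mul (q : P) :
    dunklD α j (dunklD α j (Rsq * q))
      = Rsq * dunklD α j (dunklD α j q) + C 4 * (X j * pderiv j q)
        + C 2 * q + C (4 * α j) * q := by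
  obtain ⟨h, hh⟩ := exists_odd_div j q
  rw [D_Rsq_mul, dunklD_add, D_Rsq_mul, dunklD_C_mul, D_Xj_mul,
    dunklD_eq_of α j hh]
  simp only [map_mul, map_ofNat]
  linear_combination (-2 : P) * C (α j) * hh

lemma lap_Rsq_mul {q : P} {d : ℕ} (hq : q.IsHomogeneous d) :
    dunklLap α (Rsq * q)
      = Rsq * dunklLap α q
        + C (4 * (d : ℝ) + 2 * ((k : ℝ) + 1) + 4 * ∑ i, α i) * q := by
  rw [dunklLap, dunklLap]
  simp only [DD_Rsq_mul]
  rw [Finset.sum_add_distrib, Finset.sum_add_distrib, Finset.sum_add_distrib,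
    ← Finset.mul_sum, ← Finset.mul_sum, euler_identity hq]
  rw [Finset.sum_const, Finset.card_univ, Fintype.card_fin]
  have : ∑ i : Fin (k+1), (C (4 * α i) : P) * q = C (4 * ∑ i, α i) * q := by
    rw [← Finset.sum_mul, ← map_sum]
    congr 2
    rw [← Finset.mul_sum]
  rw [this, nsmul_eq_mul, ← C_eq_coe_nat]
  rw [map_add, map_add]
  simp only [map_mul, map_ofNat]
  push_cast
  ring
end Comm

/-- The coefficient in Corollary 5.6. -/
noncomputable def cfAux (γ : ℝ) (m j : ℕ) : ℝ :=
  (2 : ℝ) ^ ((m : ℤ) - 2 * (j : ℤ)) * (-1) ^ (m - j) *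
    (ascPochhammer ℝ (m - j)).eval (-γ) * (1 / (j.factorial : ℝ))

/-- The eigenvalue factor. -/
noncomputable def efAux (γ : ℝ) (m j : ℕ) : ℝ := 4 * (j : ℝ) * ((m : ℝ) - (j : ℝ) - γ)

lemma cf_rec (γ : ℝ) {m j : ℕ} (hj : j + 1 ≤ m) :
    cfAux γ m j + efAux γ m (j + 1) * cfAux γ m (j + 1) = 0 := by
  obtain ⟨n, hn⟩ : ∃ n, m - (j + 1) = n := ⟨m - (j + 1), rfl⟩
  have h1 : m - j = n + 1 := by omega
  have hm : m = n + j + 1 := by omega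
  have h2 : ((n : ℝ)) = (m : ℝ) - (j : ℝ) - 1 := by rw [hm]; push_cast; ring
  rw [cfAux, cfAux, efAux, hn, h1]
  rw [ascPochhammer_succ_right]
  have hz : ((m : ℤ) - 2 * ((j : ℤ))) = ((m : ℤ) - 2 * ((j : ℤ) + 1)) + 2 := by ring
  push_cast
  rw [hz, zpow_add₀ (by norm_num : (2:ℝ) ≠ 0)]
  rw [Nat.factorial_succ]
  push_cast
  simp only [Polynomial.eval_mul, Polynomial.eval_add, Polynomial.eval_X,
    Polynomial.eval_natCast]
  rw [pow_succ]
  have hfac : ((j.factorial : ℝ)) ≠ 0 := Nat.cast_ne_zero.mpr (Nat.factorial_ne_zero j)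
  have hj1 : ((j : ℝ) + 1) ≠ 0 := by positivity
  field_simp
  ring_nf
  rw [h2]
  ring

section It
variable (α : Fin (k + 1) → ℝ)
local notation "P" => MvPolynomial (Fin (k + 1)) ℝ
local notation "Rsq" => (∑ i, (X i : MvPolynomial (Fin (k + 1)) ℝ) ^ 2)

lemma Rsq_isHomogeneous : (Rsq : P).IsHomogeneous 2 := by
  refine IsHomogeneous.sum _ _ _ fun i _ => ?_
  simpa using (isHomogeneous_X ℝ i).pow 2

lemma lap_Rsq_pow_mul {q : P} {d : ℕ} (hq : q.IsHomogeneous d) (γ : ℝ)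
    (hγ : γ = (1 - (k : ℝ)) / 2 - ∑ j, α j) (n : ℕ) :
    dunklLap α (Rsq ^ (n + 1) * q)
      = Rsq ^ (n + 1) * dunklLap α q
        + C (4 * ((n : ℝ) + 1) * ((d : ℝ) + (n : ℝ) + 1 - γ)) * (Rsq ^ n * q) := by
  induction n with
  | zero =>
    rw [pow_one, pow_zero, one_mul, lap_Rsq_mul α hq]
    have hc : 4 * (d : ℝ) + 2 * ((k : ℝ) + 1) + 4 * ∑ i, α i
        = 4 * ((0 : ℕ) + 1 : ℝ) * ((d : ℝ) + (0 : ℕ) + 1 - γ) := by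
      subst hγ; push_cast; ring
    rw [hc]
  | succ n ih =>
    have hq2 : ((Rsq : P) ^ (n + 1) * q).IsHomogeneous (2 * (n + 1) + d) :=
      ((Rsq_isHomogeneous).pow (n + 1)).mul hq
    rw [pow_succ', mul_assoc, lap_Rsq_mul α hq2, ih]
    have hC : (C (4 * ((n : ℝ) + 1) * ((d : ℝ) + (n : ℝ) + 1 - γ)) : P)
          + C (4 * ((2 * (n + 1) + d : ℕ) : ℝ) + 2 * ((k : ℝ) + 1) + 4 * ∑ i, α i)
        = C (4 * ((n + 1 : ℕ) + 1 : ℝ) * ((d : ℝ) + ((n + 1 : ℕ) : ℝ) + 1 - γ)) := by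
      rw [← map_add]
      congr 1
      subst hγ; push_cast; ring
    linear_combination ((Rsq : P) ^ (n + 1) * q) * hC

lemma lapIter_hom {p : P} {m : ℕ} (hp : p.IsHomogeneous m) (j : ℕ) :
    ((dunklLap α)^[j] p).IsHomogeneous (m - 2 * j) := by
  induction j with
  | zero => simpa using hp
  | succ n ih =>
    rw [Function.iterate_succ_apply']
    have := dunklLap_isHomogeneous α ih
    have harith : m - 2 * n - 2 = m - 2 * (n + 1) := by omega
    rwa [harith] at this

lemma lapIter_zero {p : P} {m : ℕ} (hp : p.IsHomogeneous m) {j : ℕ} (hj : m < 2 * j) :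
    (dunklLap α)^[j] p = 0 := by
  induction j with
  | zero => omega
  | succ n ih =>
    rw [Function.iterate_succ_apply']
    rcases Nat.lt_or_ge m (2 * n) with h | h
    · rw [ih h, dunklLap_zero]
    · exact dunklLap_of_hom_le_one α (lapIter_hom α hp n) (by omega)

lemma dunklLap_sum {ι : Type*} (s : Finset ι) (f : ι → P) :
    dunklLap α (∑ i ∈ s, f i) = ∑ i ∈ s, dunklLap α (f i) :=
  map_sum (AddMonoidHom.mk' (dunklLap α) (dunklLap_add α)) f s

theorem final_part2 (m : ℕ)
    (p : MvPolynomial (Fin (k + 1)) ℝ) (hp : p.IsHomogeneous m)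
    (γ : ℝ) (hγ : γ = (1 - (k : ℝ)) / 2 - ∑ j, α j) :
      dunklLap α
        (∑ j ∈ Finset.range (m + 1),
          C ((2 : ℝ) ^ ((m : ℤ) - 2 * (j : ℤ)) * (-1) ^ (m - j) *
              (ascPochhammer ℝ (m - j)).eval (-γ) * (1 / (j.factorial : ℝ))) *
            (∑ i, X i ^ 2) ^ j * (dunklLap α)^[j] p) = 0 := by
  have key : ∀ j ∈ Finset.range (m + 1),
      dunklLap α (C (cfAux γ m j) * Rsq ^ j * (dunklLap α)^[j] p)
        = C (cfAux γ m j) * (Rsq ^ j * (dunklLap α)^[j + 1] p)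
          + C (efAux γ m j) * (C (cfAux γ m j) * (Rsq ^ (j - 1) * (dunklLap α)^[j] p)) := by
    intro j hj
    rcases Nat.lt_or_ge m (2 * j) with hbig | hle
    · -- the iterate vanishes
      rw [lapIter_zero α hp hbig,
        lapIter_zero α hp (by omega : m < 2 * (j + 1))]
      simp [dunklLap_zero]
    · match j with
      | 0 =>
        have he0 : efAux γ m 0 = 0 := by simp [efAux]
        simp only [pow_zero, mul_one, one_mul, he0, map_zero, zero_mul, add_zero,
          Function.iterate_succ_apply', Function.iterate_zero_apply]
        rw [dunklLap_C_mul]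
      | (n + 1) =>
        rw [mul_assoc, dunklLap_C_mul,
          lap_Rsq_pow_mul α (lapIter_hom α hp (n + 1)) γ hγ n]
        have hE : (C (4 * ((n : ℝ) + 1) * (((m - 2 * (n + 1) : ℕ) : ℝ) + (n : ℝ) + 1 - γ)) : P)
            = C (efAux γ m (n + 1)) := by
          congr 1
          rw [efAux, Nat.cast_sub hle]
          push_cast
          ring
        rw [hE]
        simp only [Nat.add_sub_cancel, Function.iterate_succ_apply']
        ring
  -- now assemble
  have hcf : ∀ j : ℕ, ((2 : ℝ) ^ ((m : ℤ) - 2 * (j : ℤ)) * (-1) ^ (m - j) *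
      (ascPochhammer ℝ (m - j)).eval (-γ) * (1 / (j.factorial : ℝ))) = cfAux γ m j :=
    fun j => rfl
  simp only [hcf]
  rw [dunklLap_sum, Finset.sum_congr rfl key, Finset.sum_add_distrib]
  have hA : ∑ j ∈ Finset.range (m + 1),
      C (cfAux γ m j) * (Rsq ^ j * (dunklLap α)^[j + 1] p)
      = ∑ j ∈ Finset.range m,
        C (cfAux γ m j) * (Rsq ^ j * (dunklLap α)^[j + 1] p) := by
    rw [Finset.sum_range_succ, lapIter_zero α hp (by omega : m < 2 * (m + 1))]
    simp
  have hB : ∑ j ∈ Finset.range (m + 1),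
      C (efAux γ m j) * (C (cfAux γ m j) * (Rsq ^ (j - 1) * (dunklLap α)^[j] p))
      = ∑ j ∈ Finset.range m,
        C (efAux γ m (j + 1)) * (C (cfAux γ m (j + 1)) * (Rsq ^ j * (dunklLap α)^[j + 1] p)) := by
    rw [Finset.sum_range_succ']
    have he0 : efAux γ m 0 = 0 := by simp [efAux]
    simp [he0]
  rw [hA, hB, ← Finset.sum_add_distrib]
  refine Finset.sum_eq_zero fun j hj => ?_
  have hrec := cf_rec γ (by simpa using hj : j + 1 ≤ m)
  have : (C (cfAux γ m j) : P)
      + C (efAux γ m (j + 1)) * C (cfAux γ m (j + 1)) = 0 := by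
    rw [← map_mul, ← map_add, hrec, map_zero]
  linear_combination (Rsq ^ j * (dunklLap α)^[j + 1] p : P) * this
end It

/-- Corollary 5.6: for a homogeneous polynomial `f_m` of degree `m` and
`γ = (1-k)/2 - ∑_j α_j`, the polynomial
`∑_{j=0}^m 2^{m-2j} (-1)^{m-j} (-γ)_{m-j} (1/j!) r^{2j} Δ_α^j f_m`
(which equals `r^{2(m-γ)} f_m(D)[r^{2γ}]`) is a generalized spherical harmonic of
degree `m`: it is homogeneous of degree `m` and annihilated by `Δ_α`. -/
theorem spherical_harmonic_from_homogeneous (α : Fin (k + 1) → ℝ) (m : ℕ)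
    (p : MvPolynomial (Fin (k + 1)) ℝ) (hp : p.IsHomogeneous m)
    (γ : ℝ) (hγ : γ = (1 - (k : ℝ)) / 2 - ∑ j, α j) :
    (∑ j ∈ Finset.range (m + 1),
        C ((2 : ℝ) ^ ((m : ℤ) - 2 * (j : ℤ)) * (-1) ^ (m - j) *
            (ascPochhammer ℝ (m - j)).eval (-γ) * (1 / (j.factorial : ℝ))) *
          (∑ i, X i ^ 2) ^ j * (dunklLap α)^[j] p).IsHomogeneous m ∧
      dunklLap α
        (∑ j ∈ Finset.range (m + 1),
          C ((2 : ℝ) ^ ((m : ℤ) - 2 * (j : ℤ)) * (-1) ^ (m - j) *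
              (ascPochhammer ℝ (m - j)).eval (-γ) * (1 / (j.factorial : ℝ))) *
            (∑ i, X i ^ 2) ^ j * (dunklLap α)^[j] p) = 0 := by
  constructor
  · refine IsHomogeneous.sum _ _ _ fun j hj => ?_
    rcases le_or_gt (2 * j) m with hle | hlt
    · have h1 : ((C ((2 : ℝ) ^ ((m : ℤ) - 2 * (j : ℤ)) * (-1) ^ (m - j) *
            (ascPochhammer ℝ (m - j)).eval (-γ) * (1 / (j.factorial : ℝ))) :
            MvPolynomial (Fin (k + 1)) ℝ) *
          (∑ i, X i ^ 2) ^ j).IsHomogeneous (0 + 2 * j) :=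
        (isHomogeneous_C _ _).mul (Rsq_isHomogeneous.pow j)
      have h2 := h1.mul (lapIter_hom α hp j)
      rwa [show 0 + 2 * j + (m - 2 * j) = m by omega] at h2
    · rw [lapIter_zero α hp hlt, mul_zero]
      exact isHomogeneous_zero _ _ _
  · exact final_part2 α m p hp γ hγ
end
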